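/- If T is a theory with quantifier elimination in a language L containing no atomic formula with more than m free variables, then T is m-distal (hence DR(T) ≤ m). In particular, if all function symbols of L are unary and all relation symbols have arity at most m ≥ 2, then DR(T) ≤ m. -/

import Mathlib

open FirstOrder Language Set

namespace DR

/-- A partial type over `M` in variables indexed by `β`: a set of formulas, each with
finitely many parameters from `M`. -/
abbrev PType (L : FirstOrder.Language) (M : Type) (β : Type) : Type _ :=
  Set ((k : ℕ) × (L.Formula (β ⊕ Fin k) × (Fin k → M)))

variable {M : Type}

/-- Two `β`-tuples have the same type over the parameter set `A`. -/
def EqTp (L : FirstOrder.Language) [L.Structure M] (A : Set M) {β : Type} (f g : β → M) : Prop :=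
  ∀ (k : ℕ) (a : Fin k → M), (∀ i, a i ∈ A) →
    ∀ φ : L.Formula (β ⊕ Fin k), φ.Realize (Sum.elim f a) ↔ φ.Realize (Sum.elim g a)

/-- All parameters of formulas in `p` lie in `D`. -/
def paramsIn {L : FirstOrder.Language} {β : Type} (D : Set M) (p : PType L M β) : Prop :=
  ∀ x ∈ p, ∀ i, x.2.2 i ∈ D

/-- The set of parameters appearing in `p`. -/
def paramSet {L : FirstOrder.Language} {β : Type} (p : PType L M β) : Set M :=
  ⋃ x ∈ p, Set.range x.2.2

/-- The tuple `f` realizes every formula of `p`. -/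
def realizes {L : FirstOrder.Language} [L.Structure M] {β : Type} (f : β → M)
    (p : PType L M β) : Prop :=
  ∀ x ∈ p, x.2.1.Realize (Sum.elim f x.2.2)

/-- `p` is finitely satisfiable by tuples with coordinates in `A`. -/
def finSatIn (L : FirstOrder.Language) [L.Structure M] (A : Set M) {β : Type}
    (p : PType L M β) : Prop :=
  ∀ s : Finset ((k : ℕ) × (L.Formula (β ⊕ Fin k) × (Fin k → M))), ↑s ⊆ p →
    ∃ f : β → M, (∀ i, f i ∈ A) ∧ ∀ x ∈ s, x.2.1.Realize (Sum.elim f x.2.2)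

/-- `p` is a complete (consistent) type over the parameter set `D`. -/
def isCompleteOver (L : FirstOrder.Language) [L.Structure M] (D : Set M) {β : Type}
    (p : PType L M β) : Prop :=
  paramsIn D p ∧ finSatIn L Set.univ p ∧
    ∀ (k : ℕ) (φ : L.Formula (β ⊕ Fin k)) (d : Fin k → M), (∀ i, d i ∈ D) →
      (⟨k, φ, d⟩ ∈ p ∨ ⟨k, φ.not, d⟩ ∈ p)

/-- `p` (a type with parameters in `D`) is invariant over `A`: membership of a formula depends
only on the type over `A` of its parameter tuple. -/
def invariantOver (L : FirstOrder.Language) [L.Structure M] (A D : Set M) {β : Type}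
    (p : PType L M β) : Prop :=
  ∀ (k : ℕ) (φ : L.Formula (β ⊕ Fin k)) (d d' : Fin k → M), (∀ i, d' i ∈ D) →
    EqTp L A d d' → ⟨k, φ, d⟩ ∈ p → ⟨k, φ, d'⟩ ∈ p

/-- The restriction of `p` to formulas with parameters in `S`. -/
def restrictParams {L : FirstOrder.Language} {β : Type} (S : Set M) (p : PType L M β) :
    PType L M β :=
  {x ∈ p | ∀ i, x.2.2 i ∈ S}

/-- `S` is `κ⁺`-saturated (realizes consistent types over parameter sets of size `≤ κ`). -/
def satIn (L : FirstOrder.Language) [L.Structure M] (S : Set M) (κ : Cardinal) : Prop :=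
  ∀ (n : ℕ) (p : PType L M (Fin n)), paramsIn S p → Cardinal.mk ↥(paramSet p) ≤ κ →
    finSatIn L Set.univ p → ∃ f : Fin n → M, (∀ i, f i ∈ S) ∧ realizes f p

/-- Saturation of the whole structure below the cardinal `κ` (in all small variable contexts). -/
def SatAll (L : FirstOrder.Language) (M : Type) [L.Structure M] (κ : Cardinal) : Prop :=
  ∀ (β : Type) (p : PType L M β), Cardinal.mk β < κ → Cardinal.mk ↥(paramSet p) < κ →
    finSatIn L Set.univ p → ∃ f : β → M, realizes f p

/-- `M` is a monster model: saturated in its own cardinality. -/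
def IsMonster (L : FirstOrder.Language) (M : Type) [L.Structure M] : Prop :=
  SatAll L M (Cardinal.mk M)

/-- The restriction of an `n`-type in tuple-variables to the sub-tuple of variables
selected by `σ`. -/
def restrictVars {L : FirstOrder.Language} {α : Type} {m n : ℕ} (σ : Fin m → Fin n)
    (p : PType L M (Fin n × α)) : PType L M (Fin m × α) :=
  {x | ⟨x.1, x.2.1.relabel (Sum.map (Prod.map σ id) id), x.2.2⟩ ∈ p}

/-- An `n`-type over `D` is `m`-determined if it is completely determined by the `m`-types
it contains among its variables. -/
def mDetermined (L : FirstOrder.Language) [L.Structure M] {α : Type} {n : ℕ} (m : ℕ)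
    (D : Set M) (p : PType L M (Fin n × α)) : Prop :=
  ∀ q : PType L M (Fin n × α), isCompleteOver L D q →
    (∀ σ : Fin m → Fin n, StrictMono σ → restrictVars σ q = restrictVars σ p) → q = p

/-- Flatten a finite tuple of `α`-tuples into a single tuple. -/
def tupcat {α : Type} {N : ℕ} (c : Fin N → α → M) : Fin N × α → M := fun x => c x.1 x.2

/-- The sequence `b` of `α`-tuples is indiscernible over `A`. -/
def indiscOver (L : FirstOrder.Language) [L.Structure M] (A : Set M) {ι α : Type}
    [LinearOrder ι] (b : ι → α → M) : Prop :=
  ∀ (N : ℕ) (f g : Fin N → ι), StrictMono f → StrictMono g →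
    EqTp L A (tupcat fun j => b (f j)) (tupcat fun j => b (g j))

/-- `T = Th(M)` is NIP: every formula has finite alternation rank on every
indiscernible sequence. -/
def IsNIP (L : FirstOrder.Language) (M : Type) [L.Structure M] : Prop :=
  ∀ (β ι : Type) [LinearOrder ι] (b : ι → β → M), indiscOver L ∅ b →
    ∀ (k : ℕ) (φ : L.Formula (β ⊕ Fin k)) (d : Fin k → M),
      ∃ N : ℕ, ∀ f : Fin (N + 1) → ι, StrictMono f →
        ∃ j : Fin N,
          (φ.Realize (Sum.elim (b (f j.castSucc)) d) ↔ φ.Realize (Sum.elim (b (f j.succ)) d))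

/-- The (global) limit type of a sequence: formulas eventually satisfied along the sequence. -/
def limTp (L : FirstOrder.Language) [L.Structure M] {ι : Type} [LinearOrder ι] (b : ι → M) :
    PType L M (Fin 1) :=
  {x | ∃ i₀ : ι, ∀ i ≥ i₀, x.2.1.Realize (Sum.elim (fun _ : Fin 1 => b i) x.2.2)}

/-- The product `p₀ ⊗ ⋯ ⊗ p_{n-1}` (resolved left to right) of global types invariant
over `A`, in singleton variables. -/
def nProd (L : FirstOrder.Language) [L.Structure M] (A : Set M) :
    (n : ℕ) → (Fin n → PType L M (Fin 1)) → PType L M (Fin n)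
  | 0, _ => {x | x.2.1.Realize (Sum.elim (fun v : Fin 0 => v.elim0) x.2.2)}
  | n + 1, ps =>
    {x | ∀ a : M,
      realizes (fun _ : Fin 1 => a) (restrictParams (A ∪ Set.range x.2.2) (ps 0)) →
      ⟨x.1 + 1,
        x.2.1.relabel (Sum.elim
          (fun v : Fin (n + 1) =>
            (Fin.cases (Sum.inr (Fin.last x.1)) (fun i => Sum.inl i) v : Fin n ⊕ Fin (x.1 + 1)))
          (fun j : Fin x.1 => Sum.inr j.castSucc)),
        Fin.snoc x.2.2 a⟩ ∈ nProd L A n (fun i => ps i.succ)}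

/-- `c` is (the left part of) a Dedekind cut: a nonempty proper lower set with no maximum,
whose complement has no minimum. -/
def IsDedekindCut {ι : Type} [LinearOrder ι] (c : Set ι) : Prop :=
  c.Nonempty ∧ cᶜ.Nonempty ∧ (∀ i ∈ c, ∀ j, j ≤ i → j ∈ c) ∧
    (∀ i ∈ c, ∃ j ∈ c, i < j) ∧ (∀ i ∈ cᶜ, ∃ j ∈ cᶜ, j < i)

/-- The strict order on the index extended by points inserted at the cuts `Lc`. -/
def insLT {ι η : Type} [LinearOrder ι] [LinearOrder η] (Lc : η → Set ι) :
    (ι ⊕ η) → (ι ⊕ η) → Prop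
  | Sum.inl i, Sum.inl j => i < j
  | Sum.inl i, Sum.inr e => i ∈ Lc e
  | Sum.inr e, Sum.inl i => i ∉ Lc e
  | Sum.inr e, Sum.inr e' => Lc e ⊂ Lc e' ∨ (Lc e = Lc e' ∧ e < e')

/-- The sequence `b` remains indiscernible over `A` after inserting the tuples `a e` for
`e ∈ S`, each at the cut `Lc e`. -/
def InsertsInd (L : FirstOrder.Language) [L.Structure M] (A : Set M) {ι η α : Type}
    [LinearOrder ι] [LinearOrder η] (b : ι → α → M) (Lc : η → Set ι) (a : η → α → M)
    (S : Set η) : Prop :=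
  ∀ (N : ℕ) (f g : Fin N → ι ⊕ η),
    (∀ x y : Fin N, x < y → insLT Lc (f x) (f y)) →
    (∀ x y : Fin N, x < y → insLT Lc (g x) (g y)) →
    (∀ x e, f x = Sum.inr e → e ∈ S) → (∀ x e, g x = Sum.inr e → e ∈ S) →
    EqTp L A (tupcat fun j => Sum.elim b a (f j)) (tupcat fun j => Sum.elim b a (g j))

/-- The left part of the `t`-th cut of the partition `part`. -/
def cutSet {ι : Type} [LinearOrder ι] {n : ℕ} (part : ι → Fin (n + 1)) (t : Fin n) : Set ι :=
  {i | part i ≤ t.castSucc}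

/-- `part` is a Dedekind partition: a monotone surjection onto `Fin (n+1)` all of whose
`n` cuts are Dedekind. -/
def IsDedekindPartition {ι : Type} [LinearOrder ι] {n : ℕ} (part : ι → Fin (n + 1)) : Prop :=
  Monotone part ∧ (∀ t, ∃ i, part i = t) ∧ ∀ t : Fin n, IsDedekindCut (cutSet part t)

/-- The Dedekind partition `part` of the sequence `b` (indiscernible over `A`) is `m`-distal:
if every `m`-element subset of `(a 0, …, a (n-1))` inserts indiscernibly over `A` at the cuts,
then the whole tuple inserts. -/
def MDistalPartition (L : FirstOrder.Language) [L.Structure M] (A : Set M) {ι α : Type}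
    [LinearOrder ι] {n : ℕ} (b : ι → α → M) (part : ι → Fin (n + 1)) (m : ℕ) : Prop :=
  ∀ a : Fin n → α → M,
    (∀ S : Set (Fin n), S.ncard = m → InsertsInd L A b (cutSet part) a S) →
    InsertsInd L A b (cutSet part) a Set.univ

/-- The limit type `lim(c₀, …, c_{n-1})` of the cuts of the partition `part`, as a type
in `n` tuple-variables: formulas satisfied by all tuples close enough to the cuts. -/
def limCutTp (L : FirstOrder.Language) [L.Structure M] {ι α : Type} [LinearOrder ι] {n : ℕ}
    (b : ι → α → M) (part : ι → Fin (n + 1)) : PType L M (Fin n × α) :=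
  {x | ∃ lo hi : Fin n → ι,
    (∀ t, lo t ∈ cutSet part t) ∧ (∀ t, hi t ∉ cutSet part t) ∧
    ∀ it : Fin n → ι, (∀ t, lo t < it t ∧ it t < hi t) →
      x.2.1.Realize (Sum.elim (fun v => b (it v.1) v.2) x.2.2)}

/-- Two sequences have the same EM-type (over `∅`). -/
def SameEM (L : FirstOrder.Language) [L.Structure M] {ι κι α : Type} [LinearOrder ι]
    [LinearOrder κι] (b : ι → α → M) (c : κι → α → M) : Prop :=
  ∀ (N : ℕ) (f : Fin N → ι) (g : Fin N → κι), StrictMono f → StrictMono g →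
    EqTp L ∅ (tupcat fun j => b (f j)) (tupcat fun j => c (g j))

/-- The complete EM-type of the indiscernible sequence `b` is `(n, m)`-distal: every Dedekind
partition with `n` cuts of every sequence with the same EM-type is `m`-distal. -/
def EMdistalNM (L : FirstOrder.Language) [L.Structure M] {ι α : Type} [LinearOrder ι]
    (b : ι → α → M) (n m : ℕ) : Prop :=
  ∀ (κι : Type) [LinearOrder κι] (c : κι → α → M), SameEM L b c →
    ∀ part : κι → Fin (n + 1), IsDedekindPartition part → MDistalPartition L ∅ c part m

/-- The index of an `(m+1)`-skeleton: `ω + (ω* + ω) + ⋯ + (ω* + ω) + ω*` with `m` middle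
pieces of type `ω* + ω ≅ ℤ`. -/
abbrev SkelIdx (m : ℕ) : Type := (ℕ ⊕ₗ Lex (Fin m × ℤ)) ⊕ₗ ℕᵒᵈ

/-- The canonical partition of the skeleton index into its `m + 2` pieces. -/
def skelPart (m : ℕ) : SkelIdx m → Fin (m + 2) := fun x =>
  match ofLex x with
  | Sum.inl y =>
    match ofLex y with
    | Sum.inl _ => 0
    | Sum.inr tz => ((ofLex tz).1.succ).castSucc
  | Sum.inr _ => Fin.last (m + 1)

/-- The theory of `M`, with parameters for `A` named, is `m`-distal: every Dedekind
partition with `m + 1` cuts of every sequence indiscernible over `A` is `m`-distal over `A`. -/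
def TheoryMDistalOver (L : FirstOrder.Language) (M : Type) [L.Structure M] (A : Set M)
    (m : ℕ) : Prop :=
  ∀ (ι α : Type) [LinearOrder ι] (b : ι → α → M), indiscOver L A b →
    ∀ part : ι → Fin (m + 2), IsDedekindPartition part → MDistalPartition L A b part m

/-- `T = Th(M)` is stable: every indiscernible sequence is totally indiscernible. -/
def TotallyIndisc (L : FirstOrder.Language) (M : Type) [L.Structure M] : Prop :=
  ∀ (ι α : Type) [LinearOrder ι] (b : ι → α → M), indiscOver L ∅ b →
    ∀ (N : ℕ) (f g : Fin N → ι), Function.Injective f → Function.Injective g →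
      EqTp L ∅ (tupcat fun j => b (f j)) (tupcat fun j => b (g j))

/-- `T = Th(M)` is strongly `1`-distal. -/
def StronglyOneDistal (L : FirstOrder.Language) (M : Type) [L.Structure M] : Prop :=
  ∀ (ι α : Type) [LinearOrder ι] (b : ι → α → M) (c : Set ι), IsDedekindCut c →
    ∀ (D : Set M) (a : α → M), indiscOver L D b →
      InsertsInd L ∅ b (fun _ : PUnit => c) (fun _ => a) Set.univ →
      InsertsInd L D b (fun _ : PUnit => c) (fun _ => a) Set.univ

/-- The language with a single `n`-ary relation symbol. -/
def hyperLang (n : ℕ) : FirstOrder.Language where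
  Functions := fun _ => Empty
  Relations := fun k => PLift (k = n)

/-- The edge relation of a `hyperLang n`-structure. -/
def Edge {n : ℕ} {M : Type} [S : (hyperLang n).Structure M] (v : Fin n → M) : Prop :=
  Structure.RelMap (L := hyperLang n) (⟨rfl⟩ : (hyperLang n).Relations n) v

/-- `M` is a generic `(n+2)`-uniform hypergraph: an infinite `(n+2)`-uniform hypergraph
satisfying all extension axioms `φ_{s,t}`. -/
def IsGenericHypergraph (n : ℕ) (M : Type) [S : (hyperLang (n + 2)).Structure M] : Prop :=
  Infinite M ∧
  (∀ (v : Fin (n + 2) → M) (σ : Equiv.Perm (Fin (n + 2))), Edge v → Edge (v ∘ σ)) ∧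
  (∀ v : Fin (n + 2) → M, Edge v → Function.Injective v) ∧
  ∀ (s t : ℕ) (A : Fin s → Fin (n + 1) → M) (B : Fin t → Fin (n + 1) → M),
    (∀ i, Function.Injective (A i)) → (∀ j, Function.Injective (B j)) →
    (∀ i j, i ≠ j → Set.range (A i) ≠ Set.range (A j)) →
    (∀ i j, i ≠ j → Set.range (B i) ≠ Set.range (B j)) →
    (∀ i j, Set.range (A i) ≠ Set.range (B j)) →
    ∃ x : M, (∀ i, Edge (Fin.snoc (A i) x)) ∧ ∀ j, ¬ Edge (Fin.snoc (B j) x)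

variable {M : Type}

/-- The unique `A`-invariant global extension of a type `q` over the saturated model `S`. -/
def globExtT (L : FirstOrder.Language) [L.Structure M] (A S : Set M) {β : Type}
    (q : PType L M β) : PType L M β :=
  {x | ∀ d' : Fin x.1 → M, (∀ i, d' i ∈ S) → EqTp L A x.2.2 d' → ⟨x.1, x.2.1, d'⟩ ∈ q}

/-- The product `p ⊗ q` (resolved left to right) of a type `p` with an `A`-invariant type `q`
over the saturated model `S`: `φ(x, y, d) ∈ p ⊗ q` iff for every `a` realizing the restriction
of `p` to `A ∪ d`, the formula `φ(a, y, d)` lies in the `A`-invariant global extension of `q`. -/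
def prodT (L : FirstOrder.Language) [L.Structure M] (A S : Set M) {na nb : ℕ}
    (p : PType L M (Fin na)) (q : PType L M (Fin nb)) : PType L M (Fin na ⊕ Fin nb) :=
  {x | ∀ a : Fin na → M, realizes a (restrictParams (A ∪ Set.range x.2.2) p) →
    ⟨x.1 + na,
      x.2.1.relabel (Sum.elim
        (Sum.elim (fun i : Fin na => Sum.inr (Fin.natAdd x.1 i)) Sum.inl)
        (fun j : Fin x.1 => Sum.inr (Fin.castAdd na j))),
      Fin.append x.2.2 a⟩ ∈ globExtT L A S q}

/-- A Dedekind partition with `n` cuts of a sequence with the same EM-type as `b`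
which is `m`-distal. -/
structure DistalWitness (L : FirstOrder.Language) (M : Type) [L.Structure M] {ι α : Type}
    [LinearOrder ι] (b : ι → α → M) (n m : ℕ) : Type 1 where
  κι : Type
  [inst : LinearOrder κι]
  c : κι → α → M
  part : κι → Fin (n + 1)
  same : SameEM L b c
  ded : IsDedekindPartition part
  dist : MDistalPartition L ∅ c part m

end DR

/-! Under quantifier elimination, the type of a tuple is determined by its atomic formulas; if
moreover atomic formulas have at most `m` free variables, the type of a sequence of tuples is
determined by the types of its subsequences of length at most `m`. Such a subsequence of a
sequence with inserted tuples involves at most `m` of them, so by hypothesis it has the type of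
the corresponding subsequence of an increasing sequence from `b`. Hence any two such sequences
have the same type. -/
theorem FirstOrder.Language.BoundedFormula.IsQF.realize_iff_of_forall_isAtomic
    {L : FirstOrder.Language} {M : Type} [L.Structure M] {γ : Type} {n : ℕ}
    {ψ : L.BoundedFormula γ n} (hψ : ψ.IsQF) {v w : γ → M} {xs : Fin n → M}
    (h : ∀ θ : L.BoundedFormula γ n, θ.IsAtomic → (θ.Realize v xs ↔ θ.Realize w xs)) :
    ψ.Realize v xs ↔ ψ.Realize w xs := by
  induction hψ with
  | falsum => exact Iff.rfl
  | of_isAtomic hθ => exact h _ hθ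
  | imp _ _ ih₁ ih₂ => exact imp_congr ih₁ ih₂

theorem exists_ncard_eq_forall_inr_mem {γ : Type} {K m n : ℕ} (hK : K ≤ m) (hmn : m ≤ n)
    (w : Fin K → γ ⊕ Fin n) :
    ∃ S : Set (Fin n), S.ncard = m ∧ ∀ x e, w x = Sum.inr e → e ∈ S := by
  classical
  let T := (Finset.univ.image w).toRight
  have hT : T.card ≤ m :=
    Finset.card_toRight_le.trans (Finset.card_image_le.trans (by simpa using hK))
  obtain ⟨S, hTS, -, hS⟩ := Finset.exists_subsuperset_card_eq T.subset_univ hT (by simpa)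
  refine ⟨S, by simpa using hS, fun x e hx => hTS ?_⟩
  exact Finset.mem_toRight.2 (hx ▸ Finset.mem_image_of_mem w (Finset.mem_univ x))

namespace DR

def HasQuantifierElim (L : FirstOrder.Language) (M : Type) [L.Structure M] : Prop :=
  ∀ (β : Type) (φ : L.Formula β), ∃ ψ : L.Formula β,
    BoundedFormula.IsQF ψ ∧ ∀ v : β → M, φ.Realize v ↔ ψ.Realize v

def AtomicFreeVarsLE (L : FirstOrder.Language) (m : ℕ) : Prop :=
  ∀ (β : Type) [DecidableEq β] (φ : L.Formula β),
    BoundedFormula.IsAtomic φ → (BoundedFormula.freeVarFinset φ).card ≤ m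

section

variable {L : FirstOrder.Language} [L.Structure M]

theorem EqTp.symm {A : Set M} {β : Type} {f g : β → M} (h : EqTp L A f g) : EqTp L A g f :=
  fun k a ha φ => (h k a ha φ).symm

theorem EqTp.trans {A : Set M} {β : Type} {f g h : β → M} (hfg : EqTp L A f g)
    (hgh : EqTp L A g h) : EqTp L A f h :=
  fun k a ha φ => (hfg k a ha φ).trans (hgh k a ha φ)

theorem exists_rename_subseq {N : ℕ} {α β : Type} (F : Set ((Fin N × α) ⊕ β))
    (J : Finset (Fin N)) (hJ : ∀ j s, Sum.inl (j, s) ∈ F → j ∈ J) :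
    ∃ ρ : F → (Fin J.card × α) ⊕ β, ∀ (c : Fin N → α → M) (d : β → M) (x : F),
      Sum.elim (tupcat (c ∘ J.orderEmbOfFin rfl)) d (ρ x) = Sum.elim (tupcat c) d x := by
  refine ⟨fun x => match x with
    | ⟨Sum.inl (j, s), hx⟩ => Sum.inl ((J.orderIsoOfFin rfl).symm ⟨j, hJ j s hx⟩, s)
    | ⟨Sum.inr i, _⟩ => Sum.inr i, fun c d x => ?_⟩
  rcases x with ⟨(⟨j, s⟩ | i), _⟩
  · simp [tupcat, ← Finset.coe_orderIsoOfFin_apply]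
  · rfl

theorem eqTp_of_forall_subseq {m : ℕ} (hqe : HasQuantifierElim L M)
    (harity : AtomicFreeVarsLE L m) {A : Set M} {α : Type} {N : ℕ} (u v : Fin N → α → M)
    (h : ∀ K ≤ m, ∀ σ : Fin K → Fin N, StrictMono σ →
      EqTp L A (tupcat (u ∘ σ)) (tupcat (v ∘ σ))) :
    EqTp L A (tupcat u) (tupcat v) := by
  classical
  intro k d hd φ
  obtain ⟨ψ, hψ, hφψ⟩ := hqe _ φ
  rw [hφψ, hφψ]
  refine hψ.realize_iff_of_forall_isAtomic fun θ hθ => ?_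
  let J := θ.freeVarFinset.toLeft.image Prod.fst
  have hJ : J.card ≤ m :=
    Finset.card_image_le.trans (Finset.card_toLeft_le.trans (harity _ θ hθ))
  have hθJ : ∀ j s, Sum.inl (j, s) ∈ θ.freeVarFinset → j ∈ J := fun j s hx =>
    Finset.mem_image.2 ⟨(j, s), Finset.mem_toLeft.2 hx, rfl⟩
  obtain ⟨ρ, hρ⟩ := exists_rename_subseq (M := M) _ J hθJ
  rw [← BoundedFormula.realize_restrictFreeVar (f := ρ) _ (hρ u d),
    ← BoundedFormula.realize_restrictFreeVar (f := ρ) _ (hρ v d)]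
  exact h J.card hJ _ (J.orderEmbOfFin rfl).strictMono k d hd _

theorem mDistalPartition_of_qe {m : ℕ} (hqe : HasQuantifierElim L M)
    (harity : AtomicFreeVarsLE L m) {A : Set M} {ι α : Type} [LinearOrder ι] [Infinite ι]
    {n : ℕ} (hmn : m ≤ n) (b : ι → α → M) (part : ι → Fin (n + 1)) :
    MDistalPartition L A b part m := by
  intro a hsub N f g hf hg _ _
  obtain ⟨ch⟩ := nonempty_orderEmbedding_of_finite_infinite (Fin N) ι
  have eqTp_chain : ∀ w : Fin N → ι ⊕ Fin n,
      (∀ x y, x < y → insLT (cutSet part) (w x) (w y)) →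
      EqTp L A (tupcat fun j => Sum.elim b a (w j)) (tupcat fun j => b (ch j)) := by
    intro w hw
    refine eqTp_of_forall_subseq hqe harity _ _ fun K hK σ hσ => ?_
    obtain ⟨S, hS, hwS⟩ := exists_ncard_eq_forall_inr_mem hK hmn (w ∘ σ)
    exact hsub S hS K (w ∘ σ) (Sum.inl ∘ ch ∘ σ) (fun x y hxy => hw _ _ (hσ hxy))
      (fun x y hxy => ch.strictMono (hσ hxy)) hwS (fun x e he => nomatch he)
  exact (eqTp_chain f hf).trans (eqTp_chain g hg).symm

end

theorem IsDedekindCut.infinite {ι : Type} [LinearOrder ι] {c : Set ι} (hc : IsDedekindCut c) :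
    Infinite ι := by
  have : Nonempty c := hc.1.to_subtype
  have : NoMaxOrder c := ⟨fun i => by
    obtain ⟨j, hj, hij⟩ := hc.2.2.2.1 i i.2
    exact ⟨⟨j, hj⟩, hij⟩⟩
  exact Infinite.of_injective (Subtype.val : c → ι) Subtype.val_injective

theorem stmt14_general (L : FirstOrder.Language) (M : Type) [L.Structure M] (m : ℕ)
    (hqe : ∀ (β : Type) (φ : L.Formula β), ∃ ψ : L.Formula β,
      BoundedFormula.IsQF ψ ∧ ∀ v : β → M, φ.Realize v ↔ ψ.Realize v)
    (harity : ∀ (β : Type) [DecidableEq β] (φ : L.Formula β),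
      BoundedFormula.IsAtomic φ → (BoundedFormula.freeVarFinset φ).card ≤ m) :
    TheoryMDistalOver L M ∅ m := by
  intro ι α _ b _ part hpart
  have : Infinite ι := (hpart.2.2 0).infinite
  exact mDistalPartition_of_qe hqe harity m.le_succ b part

/-- a theory with quantifier elimination in a language whose atomic formulas
have at most `m` free variables is `m`-distal. -/
theorem stmt14 (L : FirstOrder.Language) (M : Type) [L.Structure M] (m : ℕ) (hm : 0 < m)
    (hqe : ∀ (β : Type) (φ : L.Formula β), ∃ ψ : L.Formula β,
      BoundedFormula.IsQF ψ ∧ ∀ v : β → M, φ.Realize v ↔ ψ.Realize v)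
    (harity : ∀ (β : Type) [DecidableEq β] (φ : L.Formula β),
      BoundedFormula.IsAtomic φ → (BoundedFormula.freeVarFinset φ).card ≤ m) :
    TheoryMDistalOver L M ∅ m :=
  stmt14_general L M m hqe harity

end DR
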